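/- For all integers k, j with 1 ≤ j ≤ k, one has C(k, j) · B_{k-j} = k · Σ_{i=j}^{k} (1/i) · S_1(i, j) · S_2(k−1, i−1), where B_{k-j} is the (k−j)-th Bernoulli number, S_1 are the signed Stirling numbers of the first kind, and S_2 are the Stirling numbers of the second kind. -/

import Mathlib

/-- The signed Stirling numbers of the first kind, as coefficients of the
falling factorial `x(x-1)⋯(x-n+1) = Σ_{j=0}^{n} S_1(n,j) x^j`. -/
noncomputable def stirlingFirst (n j : ℕ) : ℚ :=
  (∏ i ∈ Finset.range n, (Polynomial.X - Polynomial.C (i : ℚ))).coeff j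

/-- The (unsigned) Stirling numbers of the second kind
`S_2(k,j) = (1/j!) Σ_{i=0}^{j} (-1)^{j-i} C(j,i) i^k`. -/
def stirlingSecond (k j : ℕ) : ℚ :=
  (1 / (Nat.factorial j : ℚ)) *
    ∑ i ∈ Finset.range (j + 1), (-1 : ℚ) ^ (j - i) * (Nat.choose j i : ℚ) * (i : ℚ) ^ k

/-!
Put `p = k - 1` and let `F` be the polynomial with `F(n) = ∑_{m<n} m ^ p`. The Gregory–Newton
formula expands `m ^ p` in falling factorials `m(m-1)⋯(m-i+1)`, with coefficients the forward
differences `i! S_2(p,i)` of `x ^ p` at `0`; summing over `m < n` by the hockey-stick identity gives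
`F = ∑_i S_2(p,i)/(i+1) · x(x-1)⋯(x-i)`, whose coefficient of `X ^ j` is the right-hand side
divided by `k`. Faulhaber's formula `F = (1/k) ∑_i C(k,i) B_i X^(k-i)` gives `C(k,j) B_(k-j) / k`
for the same coefficient.
-/

open Finset

lemma stirlingSecond_eq_fwdDiff_iter (p i : ℕ) :
    stirlingSecond p i = (fwdDiff 1)^[i] (fun x : ℚ ↦ x ^ p) 0 / i.factorial := by
  rw [fwdDiff_iter_eq_sum_shift, stirlingSecond, one_div, inv_mul_eq_div]
  simp

lemma stirlingSecond_eq_zero_of_lt {p i : ℕ} (h : p < i) : stirlingSecond p i = 0 := by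
  rw [stirlingSecond_eq_fwdDiff_iter, fwdDiff_iter_pow_eq_zero_of_lt h, Pi.zero_apply, zero_div]

lemma pow_eq_sum_stirlingSecond_mul_descFactorial (p m : ℕ) :
    (m : ℚ) ^ p = ∑ i ∈ range (p + 1), stirlingSecond p i * m.descFactorial i := by
  have newton := shift_eq_sum_fwdDiff_iter (1 : ℚ) (fun x : ℚ ↦ x ^ p) m 0
  have hterm : ∀ i, m.choose i • (fwdDiff 1)^[i] (fun x : ℚ ↦ x ^ p) 0
      = stirlingSecond p i * m.descFactorial i := fun i ↦ by
    rw [stirlingSecond_eq_fwdDiff_iter, Nat.descFactorial_eq_factorial_mul_choose, nsmul_eq_mul]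
    push_cast
    field_simp
  simp only [zero_add, nsmul_eq_mul, mul_one, hterm] at newton
  rw [newton]
  -- The terms with `i > m` or `i > p` vanish, so both sums cut down to `i ≤ min m p`.
  have htrunc (n : ℕ) (hn : min m p ≤ n) :
      ∑ i ∈ range (min m p + 1), stirlingSecond p i * m.descFactorial i
        = ∑ i ∈ range (n + 1), stirlingSecond p i * m.descFactorial i := by
    refine sum_subset (range_subset_range.2 (by omega)) fun i _ hi ↦ ?_
    rcases lt_or_ge m i with hmi | him
    · simp [Nat.descFactorial_eq_zero_iff_lt.2 hmi]
    · simp [stirlingSecond_eq_zero_of_lt (show p < i by rw [mem_range] at hi; omega)]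
  rw [← htrunc m (min_le_left _ _), htrunc p (min_le_right _ _)]

lemma succ_mul_sum_range_descFactorial (i n : ℕ) :
    (i + 1) * ∑ m ∈ range n, m.descFactorial i = n.descFactorial (i + 1) := by
  induction n with
  | zero => simp
  | succ n ih =>
    rw [sum_range_succ, mul_add, ih, Nat.succ_descFactorial_succ]
    rcases le_or_gt i n with h | h
    · rw [Nat.descFactorial_succ, ← add_mul]
      congr 1
      omega
    · simp [Nat.descFactorial_eq_zero_iff_lt.2 h]

lemma sum_range_pow_eq_sum_stirlingSecond (p n : ℕ) :
    ∑ m ∈ range n, (m : ℚ) ^ p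
      = ∑ i ∈ range (p + 1), stirlingSecond p i / (i + 1) * n.descFactorial (i + 1) := by
  simp_rw [pow_eq_sum_stirlingSecond_mul_descFactorial p, ← succ_mul_sum_range_descFactorial]
  rw [sum_comm]
  refine sum_congr rfl fun i _ ↦ ?_
  rw [← mul_sum]
  push_cast
  field_simp

open Polynomial in
lemma sum_C_stirlingSecond_mul_descPochhammer (p : ℕ) :
    ∑ i ∈ range (p + 1), C (stirlingSecond p i / (i + 1)) * descPochhammer ℚ (i + 1)
      = ∑ i ∈ range (p + 1),
          C (_root_.bernoulli i * (p + 1).choose i / (p + 1)) * X ^ (p + 1 - i) := by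
  refine eq_of_infinite_eval_eq _ _
    (Set.infinite_of_injective_forall_mem Nat.cast_injective fun n : ℕ ↦ ?_)
  simp only [Set.mem_ofPred_eq, eval_finsetSum, eval_mul, eval_C, eval_pow, eval_X,
    descPochhammer_eval_eq_descFactorial]
  rw [← sum_range_pow_eq_sum_stirlingSecond, sum_range_pow]
  exact sum_congr rfl fun i _ ↦ by ring

open Polynomial in
lemma descPochhammer_eq_prod_range {R : Type*} [CommRing R] (n : ℕ) :
    descPochhammer R n = ∏ i ∈ range n, (X - C (i : R)) := by
  induction n with
  | zero => simp
  | succ n ih => rw [descPochhammer_succ_right, prod_range_succ, ih, C_eq_natCast]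

lemma stirlingFirst_eq_coeff_descPochhammer (n j : ℕ) :
    stirlingFirst n j = (descPochhammer ℚ n).coeff j := by
  rw [stirlingFirst, descPochhammer_eq_prod_range]

lemma stirlingFirst_eq_zero_of_lt {n j : ℕ} (h : n < j) : stirlingFirst n j = 0 := by
  rw [stirlingFirst_eq_coeff_descPochhammer]
  exact Polynomial.coeff_eq_zero_of_natDegree_lt (by rwa [descPochhammer_natDegree])

lemma sum_Icc_stirlingFirst_mul_stirlingSecond {p j : ℕ} (hj : 1 ≤ j) :
    ∑ i ∈ Icc j (p + 1), 1 / (i : ℚ) * stirlingFirst i j * stirlingSecond p (i - 1)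
      = ∑ i ∈ range (p + 1), stirlingSecond p i / (i + 1) * stirlingFirst (i + 1) j := by
  rw [sum_subset (Icc_subset_Icc_left hj) fun i hi hij ↦ ?_, ← Ico_add_one_right_eq_Icc,
    sum_Ico_eq_sum_range, Nat.add_sub_cancel]
  · refine sum_congr rfl fun i _ ↦ ?_
    rw [add_comm 1 i, Nat.add_sub_cancel]
    push_cast
    ring
  · rw [stirlingFirst_eq_zero_of_lt (by rw [mem_Icc] at hi hij; omega), mul_zero, zero_mul]

/-- for `1 ≤ j ≤ k`,
`C(k,j) B_{k-j} = k Σ_{i=j}^{k} (1/i) S_1(i,j) S_2(k-1,i-1)`. -/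
theorem choose_mul_bernoulli_eq' (k j : ℕ) (hj : 1 ≤ j) (hjk : j ≤ k) :
    (Nat.choose k j : ℚ) * bernoulli (k - j) =
      (k : ℚ) *
        ∑ i ∈ Finset.Icc j k,
          1 / (i : ℚ) * stirlingFirst i j * stirlingSecond (k - 1) (i - 1) := by
  obtain ⟨p, rfl⟩ : ∃ p, k = p + 1 := ⟨k - 1, by omega⟩
  have hcoeff := congrArg (Polynomial.coeff · j) (sum_C_stirlingSecond_mul_descPochhammer p)
  simp only [Polynomial.finsetSum_coeff, Polynomial.coeff_C_mul, Polynomial.coeff_X_pow,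
    ← stirlingFirst_eq_coeff_descPochhammer] at hcoeff
  rw [Nat.add_sub_cancel, sum_Icc_stirlingFirst_mul_stirlingSecond hj, hcoeff,
    sum_eq_single_of_mem (p + 1 - j) (mem_range.2 (by omega)) fun i hi hij ↦ by
      rw [if_neg (by rw [mem_range] at hi; omega), mul_zero],
    if_pos (by omega), Nat.choose_symm hjk]
  push_cast
  field_simp
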